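/- Let (κ, k) be a Sonine pair from the class L₁, n ≥ 1, and let f : (0,∞) → ℝ be such that for every j = 0, 1, …, n the j-fold sequential derivative 𝔻_{(k)}^{⟨j⟩} f exists on (0,∞) and is of the form t^{r_j} g_j(t) with r_j > −1 and g_j continuous on [0,∞), and such that for each j = 0, …, n−1 the limit c_j = lim_{t→0+} (k ∗ 𝔻_{(k)}^{⟨j⟩} f)(t) exists and is finite. Then for all t > 0, (κ^{⟨n⟩} ∗ 𝔻_{(k)}^{⟨n⟩} f)(t) = f(t) − Σ_{j=0}^{n−1} c_j κ^{⟨j+1⟩}(t). -/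

import Mathlib

/-- The Laplace convolution `(f ∗ g)(t) = ∫_0^t f(t−τ) g(τ) dτ`. -/
noncomputable def lconv (f g : ℝ → ℝ) : ℝ → ℝ :=
  fun t => ∫ τ in (0:ℝ)..t, f (t - τ) * g τ

/-- `convNPow f j` is the `(j+1)`-st convolution power `f^{⟨j+1⟩}`
(so `convNPow f 0 = f^{⟨1⟩} = f`). -/
noncomputable def convNPow (f : ℝ → ℝ) : ℕ → ℝ → ℝ
  | 0 => f
  | j + 1 => lconv f (convNPow f j)

/-- The power series `Σ a_j z^j` has a positive radius of convergence. -/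
def PosRadius (a : ℕ → ℝ) : Prop :=
  ∃ r : ℝ, 0 < r ∧ Summable fun j => |a j| * r ^ j

/-- Membership in the space `C_{−1}(0,∞)`:
`f(t) = t^r f₁(t)` with `r > −1` and `f₁` continuous on `[0,∞)`. -/
def InCm1 (f : ℝ → ℝ) : Prop :=
  ∃ (r : ℝ) (f₁ : ℝ → ℝ), -1 < r ∧ ContinuousOn f₁ (Set.Ici (0:ℝ)) ∧
    ∀ t, 0 < t → f t = t ^ r * f₁ t

/-- `(κ, k)` is a Sonine pair from the class `L₁`. -/
def SoninePairL1 (κ k : ℝ → ℝ) : Prop :=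
  (∃ (p : ℝ) (κ₁ : ℝ → ℝ), 0 < p ∧ p < 1 ∧ ContinuousOn κ₁ (Set.Ici (0:ℝ)) ∧
      ∀ t, 0 < t → κ t = t ^ (p - 1) * κ₁ t) ∧
  (∃ (q : ℝ) (k₁ : ℝ → ℝ), 0 < q ∧ q < 1 ∧ ContinuousOn k₁ (Set.Ici (0:ℝ)) ∧
      ∀ t, 0 < t → k t = t ^ (q - 1) * k₁ t) ∧
  (∀ t, 0 < t → lconv κ k t = 1)

/-- The general fractional derivative of Riemann–Liouville type:
`(𝔻_{(k)} f)(t) = d/dt (k ∗ f)(t)`. -/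
noncomputable def gfdRL (k : ℝ → ℝ) (f : ℝ → ℝ) : ℝ → ℝ :=
  deriv (lconv k f)

/-- The general fractional derivative of Caputo type:
`(∗𝔻_{(k)} g)(t) = d/dt (k ∗ g)(t) − g(0+) k(t)` where `g(0+)` is the limit of `g` at `0` from
the right. -/
noncomputable def gfdC (k : ℝ → ℝ) (g : ℝ → ℝ) : ℝ → ℝ :=
  fun t => deriv (lconv k g) t - (Filter.limUnder (nhdsWithin 0 (Set.Ioi 0)) g) * k t

open MeasureTheory Set Filter intervalIntegral
open scoped Topology

lemma InCm1.abs {f : ℝ → ℝ} (hf : InCm1 f) : InCm1 (fun t => |f t|) := by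
  obtain ⟨r, f₁, hr, hc, he⟩ := hf
  refine ⟨r, fun t => |f₁ t|, hr, hc.abs, fun t ht => ?_⟩
  show |f t| = t ^ r * |f₁ t|
  rw [he t ht, abs_mul, abs_of_pos (Real.rpow_pos_of_pos ht r)]

lemma InCm1.const (c : ℝ) : InCm1 (fun _ => c) :=
  ⟨0, fun _ => c, by norm_num, continuousOn_const, fun t ht => by
    rw [Real.rpow_zero, one_mul]⟩

lemma InCm1.continuousAt {f : ℝ → ℝ} (hf : InCm1 f) {t : ℝ} (ht : 0 < t) :
    ContinuousAt f t := by
  obtain ⟨r, f₁, hr, hc, he⟩ := hf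
  have h2 : ContinuousAt f₁ t := (hc t ht.le).continuousAt (Ici_mem_nhds ht)
  have h1 : ContinuousAt (fun s : ℝ => s ^ r) t :=
    Real.continuousAt_rpow_const t r (Or.inl ht.ne')
  have h3 : ContinuousAt (fun s : ℝ => s ^ r * f₁ s) t := h1.mul h2
  apply h3.congr
  filter_upwards [Ioi_mem_nhds ht] with s hs
  exact (he s hs).symm

lemma InCm1.continuousOn {f : ℝ → ℝ} (hf : InCm1 f) : ContinuousOn f (Ioi 0) :=
  fun _ hx => (hf.continuousAt hx).continuousWithinAt

lemma InCm1.aesm {f : ℝ → ℝ} (hf : InCm1 f) :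
    AEStronglyMeasurable f (volume.restrict (Ioi (0:ℝ))) :=
  hf.continuousOn.aestronglyMeasurable measurableSet_Ioi

lemma integrableOn_rpow_mul {s : ℝ} (hs : -1 < s) {g₁ : ℝ → ℝ}
    (hg₁ : ContinuousOn g₁ (Ici 0)) {u : ℝ} (hu : 0 < u) :
    IntegrableOn (fun τ => τ ^ s * g₁ τ) (Ioc 0 u) := by
  obtain ⟨M, hM⟩ := (isCompact_Icc (a := (0:ℝ)) (b := u)).exists_bound_of_continuousOn
    (hg₁.mono Icc_subset_Ici_self)
  have hint : IntegrableOn (fun τ : ℝ => τ ^ s) (Ioc 0 u) := by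
    have := intervalIntegral.intervalIntegrable_rpow' (a := 0) (b := u) hs
    rwa [intervalIntegrable_iff_integrableOn_Ioc_of_le hu.le] at this
  have haesm : AEStronglyMeasurable (fun τ => τ ^ s * g₁ τ) (volume.restrict (Ioc 0 u)) := by
    refine ContinuousOn.aestronglyMeasurable ?_ measurableSet_Ioc
    refine ContinuousOn.mul ?_ (hg₁.mono fun x hx => hx.1.le)
    intro x hx
    exact (Real.continuousAt_rpow_const x s (Or.inl (ne_of_gt hx.1))).continuousWithinAt
  refine Integrable.mono' (hint.const_mul M) haesm ?_
  rw [ae_restrict_iff' measurableSet_Ioc]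
  refine .of_forall fun τ hτ => ?_
  have h0 : (0:ℝ) ≤ τ ^ s := Real.rpow_nonneg hτ.1.le s
  rw [norm_mul, Real.norm_of_nonneg h0]
  calc τ ^ s * ‖g₁ τ‖ ≤ τ ^ s * M :=
        mul_le_mul_of_nonneg_left (hM τ ⟨hτ.1.le, hτ.2⟩) h0
    _ = M * τ ^ s := by ring

lemma InCm1.integrableOn_Ioc {f : ℝ → ℝ} (hf : InCm1 f) {t : ℝ} (ht : 0 < t) :
    IntegrableOn f (Ioc 0 t) := by
  obtain ⟨r, f₁, hr, hc, he⟩ := hf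
  refine (integrableOn_rpow_mul hr hc ht).congr_fun ?_ measurableSet_Ioc
  exact fun τ hτ => (he τ hτ.1).symm

lemma InCm1.intervalIntegrable {f : ℝ → ℝ} (hf : InCm1 f) {t : ℝ} (ht : 0 < t) :
    IntervalIntegrable f volume 0 t := by
  rw [intervalIntegrable_iff_integrableOn_Ioc_of_le ht.le]
  exact hf.integrableOn_Ioc ht

lemma conv_integrand_integrableOn {f g : ℝ → ℝ} (hf : InCm1 f) (hg : InCm1 g)
    {t : ℝ} (ht : 0 < t) :
    IntegrableOn (fun τ => f (t - τ) * g τ) (Ioo 0 t) := by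
  have ht2 : 0 < t / 2 := by linarith
  have hsubIcc : Icc (t/2) t ⊆ Ioi (0:ℝ) := fun x hx => lt_of_lt_of_le ht2 hx.1
  have h1 : IntegrableOn (fun τ => f (t - τ) * g τ) (Ioc 0 (t/2)) := by
    obtain ⟨Mf, hMf⟩ := (isCompact_Icc (a := t/2) (b := t)).exists_bound_of_continuousOn
      (hf.continuousOn.mono hsubIcc)
    have haesm : AEStronglyMeasurable (fun τ => f (t - τ) * g τ)
        (volume.restrict (Ioc 0 (t/2))) := by
      refine ContinuousOn.aestronglyMeasurable ?_ measurableSet_Ioc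
      refine ContinuousOn.mul ?_ (hg.continuousOn.mono fun x hx => hx.1)
      intro x hx
      have hx' : 0 < t - x := by linarith [hx.2, half_lt_self ht]
      exact ((hf.continuousAt hx').comp
        ((continuous_const.sub continuous_id).continuousAt)).continuousWithinAt
    refine Integrable.mono' (((hg.integrableOn_Ioc ht2).abs).const_mul Mf) haesm ?_
    rw [ae_restrict_iff' measurableSet_Ioc]
    refine .of_forall fun τ hτ => ?_
    rw [norm_mul]
    have : ‖f (t - τ)‖ ≤ Mf := hMf (t - τ) ⟨by linarith [hτ.2], by linarith [hτ.1]⟩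
    calc ‖f (t - τ)‖ * ‖g τ‖ ≤ Mf * ‖g τ‖ :=
          mul_le_mul_of_nonneg_right this (norm_nonneg _)
      _ = Mf * |g τ| := by rw [Real.norm_eq_abs]
  have h2 : IntegrableOn (fun τ => f (t - τ) * g τ) (Ioo (t/2) t) := by
    obtain ⟨Mg, hMg⟩ := (isCompact_Icc (a := t/2) (b := t)).exists_bound_of_continuousOn
      (hg.continuousOn.mono hsubIcc)
    have hfi : IntegrableOn (fun τ => f (t - τ)) (Ioo (t/2) t) := by
      have h := (hf.intervalIntegrable ht).comp_sub_left t
      simp only [sub_zero, sub_self] at h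
      have h' := h.symm
      rw [intervalIntegrable_iff_integrableOn_Ioc_of_le ht.le] at h'
      exact h'.mono_set (fun x hx => ⟨lt_trans ht2 hx.1, hx.2.le⟩)
    have haesm : AEStronglyMeasurable (fun τ => f (t - τ) * g τ)
        (volume.restrict (Ioo (t/2) t)) := by
      refine ContinuousOn.aestronglyMeasurable ?_ measurableSet_Ioo
      refine ContinuousOn.mul ?_ (hg.continuousOn.mono fun x hx => lt_trans ht2 hx.1)
      intro x hx
      exact ((hf.continuousAt (sub_pos.mpr hx.2)).comp
        ((continuous_const.sub continuous_id).continuousAt)).continuousWithinAt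
    refine Integrable.mono' ((hfi.abs).mul_const Mg) haesm ?_
    rw [ae_restrict_iff' measurableSet_Ioo]
    refine .of_forall fun τ hτ => ?_
    rw [norm_mul]
    have : ‖g τ‖ ≤ Mg := hMg τ ⟨hτ.1.le, hτ.2.le⟩
    calc ‖f (t - τ)‖ * ‖g τ‖ ≤ ‖f (t - τ)‖ * Mg :=
          mul_le_mul_of_nonneg_left this (norm_nonneg _)
      _ = |f (t - τ)| * Mg := by rw [Real.norm_eq_abs]
  refine (h1.union h2).mono_set ?_
  intro τ hτ
  rcases le_or_gt τ (t/2) with hle | hlt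
  · exact Or.inl ⟨hτ.1, hle⟩
  · exact Or.inr ⟨hlt, hτ.2⟩

lemma conv_integrand_ii {f g : ℝ → ℝ} (hf : InCm1 f) (hg : InCm1 g)
    {t : ℝ} (ht : 0 < t) :
    IntervalIntegrable (fun τ => f (t - τ) * g τ) volume 0 t := by
  rw [intervalIntegrable_iff_integrableOn_Ioc_of_le ht.le]
  exact ((conv_integrand_integrableOn hf hg ht).congr_set_ae Ioo_ae_eq_Ioc.symm)


lemma ae_ne_real (t : ℝ) : ∀ᵐ (x : ℝ), x ≠ t := by
  rw [ae_iff]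
  simp only [not_not, Set.setOf_eq_eq_singleton]
  exact measure_singleton t

lemma lconv_comm (f g : ℝ → ℝ) (t : ℝ) : lconv f g t = lconv g f t := by
  have h := intervalIntegral.integral_comp_sub_left (a := (0:ℝ)) (b := t)
    (fun τ => f (t - τ) * g τ) t
  simp only [sub_zero, sub_self, sub_sub_cancel] at h
  unfold lconv
  rw [← h]
  exact intervalIntegral.integral_congr fun x _ => mul_comm _ _

lemma lconv_congr {g g' : ℝ → ℝ} (f : ℝ → ℝ) {t : ℝ} (ht : 0 < t)
    (h : ∀ τ ∈ Ioo 0 t, g τ = g' τ) : lconv f g t = lconv f g' t := by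
  unfold lconv
  refine intervalIntegral.integral_congr_ae ?_
  filter_upwards [ae_ne_real t] with τ hτ hmem
  rw [uIoc_of_le ht.le] at hmem
  rw [h τ ⟨hmem.1, lt_of_le_of_ne hmem.2 hτ⟩]

lemma lconv_sub (f g h : ℝ → ℝ) {t : ℝ}
    (hg : IntervalIntegrable (fun τ => f (t - τ) * g τ) volume 0 t)
    (hh : IntervalIntegrable (fun τ => f (t - τ) * h τ) volume 0 t) :
    lconv f (fun τ => g τ - h τ) t = lconv f g t - lconv f h t := by
  unfold lconv
  rw [← intervalIntegral.integral_sub hg hh]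
  exact intervalIntegral.integral_congr fun x _ => by ring

lemma lconv_add (f g h : ℝ → ℝ) {t : ℝ}
    (hg : IntervalIntegrable (fun τ => f (t - τ) * g τ) volume 0 t)
    (hh : IntervalIntegrable (fun τ => f (t - τ) * h τ) volume 0 t) :
    lconv f (fun τ => g τ + h τ) t = lconv f g t + lconv f h t := by
  unfold lconv
  rw [← intervalIntegral.integral_add hg hh]
  exact intervalIntegral.integral_congr fun x _ => by ring

lemma lconv_const_mul (c : ℝ) (f g : ℝ → ℝ) (t : ℝ) :
    lconv f (fun τ => c * g τ) t = c * lconv f g t := by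
  unfold lconv
  rw [← intervalIntegral.integral_const_mul]
  exact intervalIntegral.integral_congr fun x _ => by ring

lemma lconv_one_left (g : ℝ → ℝ) (t : ℝ) :
    lconv (fun _ => (1:ℝ)) g t = ∫ τ in (0:ℝ)..t, g τ := by
  unfold lconv; simp

lemma lconv_one_right (f : ℝ → ℝ) (t : ℝ) :
    lconv f (fun _ => (1:ℝ)) t = ∫ τ in (0:ℝ)..t, f τ := by
  rw [lconv_comm, lconv_one_left]

lemma InCm1.rpow {r : ℝ} (hr : -1 < r) : InCm1 (fun x : ℝ => x ^ r) :=
  ⟨r, fun _ => 1, hr, continuousOn_const, fun t _ => by rw [mul_one]⟩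

lemma beta_integrableOn {r s : ℝ} (hr : -1 < r) (hs : -1 < s) :
    IntegrableOn (fun u : ℝ => (1 - u) ^ r * u ^ s) (Ioo 0 1) :=
  conv_integrand_integrableOn (InCm1.rpow hr) (InCm1.rpow hs) one_pos

lemma inCm1_lconv {f g : ℝ → ℝ} (hf : InCm1 f) (hg : InCm1 g) : InCm1 (lconv f g) := by
  obtain ⟨r, f₁, hr, hcf, hef⟩ := hf
  obtain ⟨s, g₁, hs, hcg, heg⟩ := hg
  set F : ℝ → ℝ → ℝ :=
    fun t u => ((1 - u) ^ r * u ^ s) * (f₁ (t * (1 - u)) * g₁ (t * u)) with hF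
  refine ⟨r + s + 1, fun t => ∫ u in Ioo (0:ℝ) 1, F t u, by linarith, ?_, ?_⟩
  · -- continuity of the B-function on Ici 0
    intro t₀ ht₀
    set T : ℝ := t₀ + 1 with hT
    have ht₀' : (0:ℝ) ≤ t₀ := ht₀
    have hT0 : (0:ℝ) ≤ T := by simp only [hT]; linarith
    obtain ⟨Mf, hMf⟩ := (isCompact_Icc (a := (0:ℝ)) (b := T)).exists_bound_of_continuousOn
      (hcf.mono Icc_subset_Ici_self)
    obtain ⟨Mg, hMg⟩ := (isCompact_Icc (a := (0:ℝ)) (b := T)).exists_bound_of_continuousOn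
      (hcg.mono Icc_subset_Ici_self)
    have hMf0 : 0 ≤ Mf := le_trans (norm_nonneg _) (hMf 0 ⟨le_refl _, hT0⟩)
    have hMg0 : 0 ≤ Mg := le_trans (norm_nonneg _) (hMg 0 ⟨le_refl _, hT0⟩)
    refine MeasureTheory.continuousWithinAt_of_dominated (bound := fun u => ((1-u)^r * u^s) * (Mf * Mg)) ?_ ?_ ?_ ?_
    · -- measurability
      filter_upwards [self_mem_nhdsWithin] with t (htI : t ∈ Ici (0:ℝ))
      refine ContinuousOn.aestronglyMeasurable ?_ measurableSet_Ioo
      intro u hu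
      have h1u : 0 < 1 - u := by linarith [hu.2]
      refine ContinuousWithinAt.mul (ContinuousWithinAt.mul ?_ ?_) (ContinuousWithinAt.mul ?_ ?_)
      · exact ((Real.continuousAt_rpow_const (1-u) r (Or.inl h1u.ne')).comp
          ((continuous_const.sub continuous_id).continuousAt)).continuousWithinAt
      · exact (Real.continuousAt_rpow_const u s (Or.inl (ne_of_gt hu.1))).continuousWithinAt
      · refine ContinuousWithinAt.comp (hcf (t * (1 - u)) ?_) ?_ ?_
        · exact mul_nonneg htI h1u.le
        · exact (Continuous.continuousWithinAt (by fun_prop))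
        · intro x hx
          exact mul_nonneg htI (by linarith [hx.2] : (0:ℝ) ≤ 1 - x)
      · refine ContinuousWithinAt.comp (hcg (t * u) (mul_nonneg htI hu.1.le)) ?_ ?_
        · exact (Continuous.continuousWithinAt (by fun_prop))
        · intro x hx
          exact mul_nonneg htI hx.1.le
    · -- bound
      have hev : ∀ᶠ t in nhdsWithin t₀ (Ici 0), t ∈ Icc (0:ℝ) T := by
        filter_upwards [self_mem_nhdsWithin,
          mem_nhdsWithin_of_mem_nhds (Iio_mem_nhds (by simp only [hT]; linarith : t₀ < T))] with t h1 h2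
        exact ⟨h1, le_of_lt h2⟩
      filter_upwards [hev] with t htm
      rw [MeasureTheory.ae_restrict_iff' measurableSet_Ioo]
      refine .of_forall fun u hu => ?_
      have h1u : (0:ℝ) ≤ 1 - u := by linarith [hu.2]
      have hb1 : (0:ℝ) ≤ (1-u)^r := Real.rpow_nonneg h1u r
      have hb2 : (0:ℝ) ≤ u^s := Real.rpow_nonneg hu.1.le s
      have harg1 : t * (1 - u) ∈ Icc (0:ℝ) T :=
        ⟨mul_nonneg htm.1 h1u, le_trans (by nlinarith [htm.1, hu.1, hu.2] : t * (1-u) ≤ t) htm.2⟩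
      have harg2 : t * u ∈ Icc (0:ℝ) T :=
        ⟨mul_nonneg htm.1 hu.1.le, le_trans (by nlinarith [htm.1, hu.1, hu.2] : t * u ≤ t) htm.2⟩
      have := mul_le_mul (hMf _ harg1) (hMg _ harg2) (norm_nonneg _) hMf0
      calc ‖F t u‖ = ((1-u)^r * u^s) * (‖f₁ (t * (1-u))‖ * ‖g₁ (t * u)‖) := by
            rw [hF]; simp only [norm_mul, Real.norm_eq_abs,
              abs_of_nonneg hb1, abs_of_nonneg hb2, abs_mul]
        _ ≤ ((1-u)^r * u^s) * (Mf * Mg) :=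
            mul_le_mul_of_nonneg_left this (mul_nonneg hb1 hb2)
    · exact (beta_integrableOn hr hs).mul_const (Mf * Mg)
    · -- continuity in t
      rw [MeasureTheory.ae_restrict_iff' measurableSet_Ioo]
      refine .of_forall fun u hu => ?_
      have h1u : (0:ℝ) ≤ 1 - u := by linarith [hu.2]
      refine ContinuousWithinAt.mul continuousWithinAt_const (ContinuousWithinAt.mul ?_ ?_)
      · refine ContinuousWithinAt.comp (hcf (t₀ * (1 - u)) (mul_nonneg ht₀ h1u)) ?_ ?_
        · exact (Continuous.continuousWithinAt (by fun_prop))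
        · intro x hx
          exact mul_nonneg hx h1u
      · refine ContinuousWithinAt.comp (hcg (t₀ * u) (mul_nonneg ht₀ hu.1.le)) ?_ ?_
        · exact (Continuous.continuousWithinAt (by fun_prop))
        · intro x hx
          exact mul_nonneg hx hu.1.le
  · -- the scaling representation
    intro t ht
    show lconv f g t = t ^ (r + s + 1) * ∫ u in Ioo (0:ℝ) 1, F t u
    have step1 : lconv f g t
        = ∫ τ in (0:ℝ)..t, ((t - τ) ^ r * f₁ (t - τ)) * (τ ^ s * g₁ τ) := by
      unfold lconv
      refine intervalIntegral.integral_congr_ae ?_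
      filter_upwards [ae_ne_real t] with τ hτ hmem
      rw [uIoc_of_le ht.le] at hmem
      have h1 : 0 < τ := hmem.1
      have h2 : 0 < t - τ := sub_pos.mpr (lt_of_le_of_ne hmem.2 hτ)
      rw [hef _ h2, heg _ h1]
    have step2 : (∫ τ in (0:ℝ)..t, ((t - τ) ^ r * f₁ (t - τ)) * (τ ^ s * g₁ τ))
        = t * ∫ u in (0:ℝ)..1,
            ((t - t*u) ^ r * f₁ (t - t*u)) * ((t*u) ^ s * g₁ (t*u)) := by
      have h := intervalIntegral.smul_integral_comp_mul_left (a := (0:ℝ)) (b := 1)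
        (fun τ => ((t - τ) ^ r * f₁ (t - τ)) * (τ ^ s * g₁ τ)) t
      simp only [mul_zero, mul_one, smul_eq_mul] at h
      rw [← h]
    have step3 : (∫ u in (0:ℝ)..1, ((t - t*u) ^ r * f₁ (t - t*u)) * ((t*u) ^ s * g₁ (t*u)))
        = ∫ u in (0:ℝ)..1, t ^ (r + s) * F t u := by
      refine intervalIntegral.integral_congr_ae ?_
      filter_upwards [ae_ne_real (1:ℝ)] with u hu hmem
      rw [uIoc_of_le zero_le_one] at hmem
      have h1u : (0:ℝ) ≤ 1 - u := by linarith [hmem.2]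
      have htu : t - t*u = t * (1 - u) := by ring
      rw [htu, Real.mul_rpow ht.le h1u, Real.mul_rpow ht.le hmem.1.le, hF,
        Real.rpow_add ht]
      ring
    rw [step1, step2, step3, intervalIntegral.integral_const_mul,
      intervalIntegral.integral_of_le zero_le_one,
      MeasureTheory.integral_Ioc_eq_integral_Ioo]
    have hpow : t ^ (r + s + 1) = t ^ (r + s) * t := by
      rw [Real.rpow_add ht, Real.rpow_one]
    rw [hpow]
    ring

noncomputable def restr (f : ℝ → ℝ) : ℝ → ℝ := (Ioi (0:ℝ)).indicator f

lemma restr_aesm {f : ℝ → ℝ} (hf : InCm1 f) : AEStronglyMeasurable (restr f) volume := by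
  rw [restr, aestronglyMeasurable_indicator_iff measurableSet_Ioi]
  exact hf.aesm

lemma restr_integrand_eq (f g : ℝ → ℝ) (x : ℝ) :
    (fun τ => restr f τ * restr g (x - τ))
      = (Ioo (0:ℝ) x).indicator (fun τ => f τ * g (x - τ)) := by
  funext τ
  simp only [restr]
  by_cases h1 : 0 < τ
  · by_cases h2 : τ < x
    · have hm : τ ∈ Ioo 0 x := mem_Ioo.mpr ⟨h1, h2⟩
      rw [Set.indicator_of_mem hm,
        Set.indicator_of_mem (mem_Ioi.mpr h1),
        Set.indicator_of_mem (mem_Ioi.mpr (sub_pos.mpr h2))]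
    · rw [Set.indicator_of_notMem (fun hm : τ ∈ Ioo 0 x => h2 hm.2),
        Set.indicator_of_notMem (a := x - τ) (by simp only [mem_Ioi, not_lt]; linarith),
        mul_zero]
  · rw [Set.indicator_of_notMem (fun hm : τ ∈ Ioo 0 x => h1 hm.1),
      Set.indicator_of_notMem (by simpa using h1), zero_mul]

lemma norm_restr (g : ℝ → ℝ) : (fun x => ‖restr g x‖) = restr (fun x => |g x|) := by
  funext x
  simp only [restr]
  by_cases hx : x ∈ Ioi (0:ℝ)
  · rw [Set.indicator_of_mem hx, Set.indicator_of_mem hx, Real.norm_eq_abs]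
  · rw [Set.indicator_of_notMem hx, Set.indicator_of_notMem hx, norm_zero]

lemma convExistsAt {f g : ℝ → ℝ} (hf : InCm1 f) (hg : InCm1 g) (x : ℝ) :
    MeasureTheory.ConvolutionExistsAt (restr f) (restr g) x
      (ContinuousLinearMap.mul ℝ ℝ) volume := by
  unfold MeasureTheory.ConvolutionExistsAt
  simp only [ContinuousLinearMap.mul_apply']
  rw [restr_integrand_eq, integrable_indicator_iff measurableSet_Ioo]
  by_cases hx : 0 < x
  · exact (conv_integrand_integrableOn hg hf hx).congr_fun
      (fun τ _ => mul_comm _ _) measurableSet_Ioo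
  · rw [Ioo_eq_empty hx]
    exact integrableOn_empty

lemma mconv_restr {f g : ℝ → ℝ} (hf : InCm1 f) (hg : InCm1 g) :
    MeasureTheory.convolution (restr f) (restr g) (ContinuousLinearMap.mul ℝ ℝ) volume
      = restr (lconv f g) := by
  funext x
  rw [MeasureTheory.convolution_def]
  simp only [ContinuousLinearMap.mul_apply']
  rw [restr_integrand_eq, MeasureTheory.integral_indicator measurableSet_Ioo]
  by_cases hx : 0 < x
  · rw [restr, Set.indicator_of_mem (mem_Ioi.mpr hx), lconv_comm]
    unfold lconv
    rw [intervalIntegral.integral_of_le hx.le, MeasureTheory.integral_Ioc_eq_integral_Ioo]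
    exact MeasureTheory.setIntegral_congr_fun measurableSet_Ioo fun τ _ => mul_comm _ _
  · rw [restr, Set.indicator_of_notMem (by simpa using hx), Ioo_eq_empty hx]
    simp

lemma lconv_assoc {f g h : ℝ → ℝ} (hf : InCm1 f) (hg : InCm1 g) (hh : InCm1 h)
    {t : ℝ} (ht : 0 < t) :
    lconv (lconv f g) h t = lconv f (lconv g h) t := by
  have key : ∀ x₀ : ℝ,
      MeasureTheory.convolution
        (MeasureTheory.convolution (restr f) (restr g) (ContinuousLinearMap.mul ℝ ℝ) volume)
        (restr h) (ContinuousLinearMap.mul ℝ ℝ) volume x₀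
      = MeasureTheory.convolution (restr f)
        (MeasureTheory.convolution (restr g) (restr h) (ContinuousLinearMap.mul ℝ ℝ) volume)
        (ContinuousLinearMap.mul ℝ ℝ) volume x₀ := by
    intro x₀
    refine MeasureTheory.convolution_assoc (ContinuousLinearMap.mul ℝ ℝ)
      (ContinuousLinearMap.mul ℝ ℝ) (ContinuousLinearMap.mul ℝ ℝ)
      (ContinuousLinearMap.mul ℝ ℝ) ?_ (restr_aesm hf) (restr_aesm hg) (restr_aesm hh)
      ?_ ?_ ?_
    · intro a b c
      simp only [ContinuousLinearMap.mul_apply']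
      ring
    · exact .of_forall (convExistsAt hf hg)
    · refine .of_forall fun x => ?_
      rw [norm_restr, norm_restr]
      exact convExistsAt hg.abs hh.abs x
    · rw [norm_restr, norm_restr, norm_restr, mconv_restr hg.abs hh.abs]
      exact convExistsAt hf.abs (inCm1_lconv hg.abs hh.abs) x₀
  have h1 : restr (lconv (lconv f g) h) t = restr (lconv f (lconv g h)) t := by
    rw [← mconv_restr (inCm1_lconv hf hg) hh, ← mconv_restr hf (inCm1_lconv hg hh),
      ← mconv_restr hf hg, ← mconv_restr hg hh]
    exact key t
  simp only [restr, Set.indicator_of_mem (mem_Ioi.mpr ht)] at h1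
  exact h1

lemma SoninePairL1.fst_inCm1 {κ k : ℝ → ℝ} (h : SoninePairL1 κ k) : InCm1 κ := by
  obtain ⟨⟨p, κ₁, hp0, _, hc, he⟩, _, _⟩ := h
  exact ⟨p - 1, κ₁, by linarith, hc, he⟩

lemma SoninePairL1.snd_inCm1 {κ k : ℝ → ℝ} (h : SoninePairL1 κ k) : InCm1 k := by
  obtain ⟨_, ⟨q, k₁, hq0, _, hc, he⟩, _⟩ := h
  exact ⟨q - 1, k₁, by linarith, hc, he⟩

lemma lconv_congr_left {g g' : ℝ → ℝ} (f : ℝ → ℝ) {t : ℝ} (ht : 0 < t)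
    (h : ∀ τ ∈ Ioo 0 t, g τ = g' τ) : lconv g f t = lconv g' f t := by
  rw [lconv_comm, lconv_comm g' f]; exact lconv_congr f ht h

lemma tendsto_primitive_zero {φ : ℝ → ℝ} {T : ℝ} (hT : 0 < T)
    (hφ : IntegrableOn φ (Icc 0 T)) :
    Tendsto (fun ε => ∫ x in (0:ℝ)..ε, φ x) (nhdsWithin 0 (Ioi 0)) (nhds 0) := by
  have hcont := intervalIntegral.continuousOn_primitive (f := φ) (a := 0) (b := T) (μ := volume) hφ
  have h0 : (0:ℝ) ∈ Icc (0:ℝ) T := ⟨le_refl _, hT.le⟩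
  have hcwa := hcont 0 h0
  have hval : (∫ t in Ioc (0:ℝ) 0, φ t) = 0 := by simp
  have htend : Tendsto (fun x => ∫ t in Ioc (0:ℝ) x, φ t) (nhdsWithin 0 (Icc 0 T)) (nhds 0) := by
    simpa [ContinuousWithinAt, hval] using hcwa
  have hle : nhdsWithin (0:ℝ) (Ioi 0) ≤ nhdsWithin 0 (Icc 0 T) := by
    refine nhdsWithin_le_iff.mpr ?_
    refine Filter.mem_of_superset
      (Filter.inter_mem self_mem_nhdsWithin
        (mem_nhdsWithin_of_mem_nhds (Iio_mem_nhds hT))) ?_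
    intro x hx
    exact ⟨le_of_lt hx.1, le_of_lt hx.2⟩
  refine (htend.mono_left hle).congr' ?_
  filter_upwards [self_mem_nhdsWithin] with x hx
  rw [intervalIntegral.integral_of_le (le_of_lt hx)]

lemma rep_of_deriv {h Df : ℝ → ℝ} {c : ℝ}
    (hdiff : ∀ t, 0 < t → HasDerivAt h (Df t) t)
    (hDf : InCm1 Df)
    (hlim : Tendsto h (nhdsWithin 0 (Ioi 0)) (nhds c)) :
    ∀ t, 0 < t → h t = c + ∫ x in (0:ℝ)..t, Df x := by
  intro t ht
  have hii : IntervalIntegrable Df volume 0 t := hDf.intervalIntegrable ht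
  have key : ∀ᶠ ε in nhdsWithin (0:ℝ) (Ioi 0),
      h t = h ε + ∫ x in ε..t, Df x := by
    filter_upwards [self_mem_nhdsWithin,
      mem_nhdsWithin_of_mem_nhds (Iio_mem_nhds ht)] with ε hε hεt
    have hε0 : (0:ℝ) < ε := hε
    have hmemε : ε ∈ uIcc (0:ℝ) t := by
      rw [uIcc_of_le ht.le]; exact ⟨hε0.le, le_of_lt hεt⟩
    have heq : (∫ x in ε..t, Df x) = h t - h ε := by
      refine intervalIntegral.integral_eq_sub_of_hasDerivAt ?_
        (hii.mono_set (uIcc_subset_uIcc hmemε right_mem_uIcc))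
      intro x hx
      rw [uIcc_of_le (le_of_lt hεt)] at hx
      exact hdiff x (lt_of_lt_of_le hε0 hx.1)
    rw [heq]; ring
  have h1 : Tendsto (fun ε => h ε + ∫ x in ε..t, Df x) (nhdsWithin 0 (Ioi 0))
      (nhds (c + ∫ x in (0:ℝ)..t, Df x)) := by
    refine Tendsto.add hlim ?_
    have hIcc : IntegrableOn Df (Icc 0 t) := by
      rw [integrableOn_Icc_iff_integrableOn_Ioc]
      exact hDf.integrableOn_Ioc ht
    have h2 : Tendsto (fun ε => (∫ x in (0:ℝ)..t, Df x) - ∫ x in (0:ℝ)..ε, Df x)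
        (nhdsWithin 0 (Ioi 0)) (nhds ((∫ x in (0:ℝ)..t, Df x) - 0)) :=
      tendsto_const_nhds.sub (tendsto_primitive_zero ht hIcc)
    rw [sub_zero] at h2
    refine h2.congr' ?_
    filter_upwards [self_mem_nhdsWithin,
      mem_nhdsWithin_of_mem_nhds (Iio_mem_nhds ht)] with ε hε hεt
    have hε0 : (0:ℝ) < ε := hε
    have hmemε : ε ∈ uIcc (0:ℝ) t := by
      rw [uIcc_of_le ht.le]; exact ⟨hε0.le, le_of_lt hεt⟩
    have hadj := intervalIntegral.integral_add_adjacent_intervals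
      (hii.mono_set (uIcc_subset_uIcc left_mem_uIcc hmemε))
      (hii.mono_set (uIcc_subset_uIcc hmemε right_mem_uIcc))
    linarith
  have h2 : Tendsto (fun _ : ℝ => h t) (nhdsWithin (0:ℝ) (Ioi 0)) (nhds (h t)) :=
    tendsto_const_nhds
  exact tendsto_nhds_unique (h2.congr' key) h1

lemma hasDerivAt_primitive {w : ℝ → ℝ} (hw : InCm1 w) {t : ℝ} (ht : 0 < t) :
    HasDerivAt (fun u => ∫ x in (0:ℝ)..u, w x) (w t) t := by
  refine intervalIntegral.integral_hasDerivAt_right (hw.intervalIntegrable ht) ?_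
    (hw.continuousAt ht)
  exact ⟨Ioi 0, Ioi_mem_nhds ht, hw.aesm⟩

lemma key_lemma {κ k f : ℝ → ℝ} (hson : SoninePairL1 κ k) (hf : InCm1 f)
    (hdiff : ∀ t, 0 < t → DifferentiableAt ℝ (lconv k f) t)
    (hDf : InCm1 (gfdRL k f))
    {c : ℝ} (hc : Filter.Tendsto (lconv k f) (nhdsWithin 0 (Set.Ioi 0)) (nhds c)) :
    ∀ t, 0 < t → lconv κ (gfdRL k f) t = f t - c * κ t := by
  have hκC : InCm1 κ := hson.fst_inCm1
  have hkC : InCm1 k := hson.snd_inCm1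
  have hone : InCm1 (fun _ : ℝ => (1:ℝ)) := InCm1.const 1
  set Df : ℝ → ℝ := gfdRL k f with hDf_def
  set h : ℝ → ℝ := lconv k f with hh_def
  have hderiv : ∀ t, 0 < t → HasDerivAt h (Df t) t := fun t ht => (hdiff t ht).hasDerivAt
  have hrep : ∀ τ, 0 < τ → h τ = c + ∫ x in (0:ℝ)..τ, Df x := rep_of_deriv hderiv hDf hc
  have E2 : ∀ t, 0 < t → lconv κ h t = ∫ x in (0:ℝ)..t, f x := by
    intro t ht
    rw [hh_def, ← lconv_assoc hκC hkC hf ht]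
    rw [lconv_congr_left f ht (g' := fun _ => (1:ℝ)) (fun τ hτ => hson.2.2 τ hτ.1)]
    exact lconv_one_left f t
  have E3 : ∀ t, 0 < t → lconv κ h t
      = c * (∫ x in (0:ℝ)..t, κ x) + ∫ x in (0:ℝ)..t, lconv κ Df x := by
    intro t ht
    have hP : InCm1 (lconv (fun _ : ℝ => (1:ℝ)) Df) := inCm1_lconv hone hDf
    have step1 : lconv κ h t
        = lconv κ (fun τ => c * (fun _ : ℝ => (1:ℝ)) τ + lconv (fun _ : ℝ => (1:ℝ)) Df τ) t := by
      refine lconv_congr κ ht fun τ hτ => ?_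
      rw [hrep τ hτ.1, ← lconv_one_left Df τ]
      ring
    have step2 : lconv κ (fun τ => c * (fun _ : ℝ => (1:ℝ)) τ + lconv (fun _ : ℝ => (1:ℝ)) Df τ) t
        = c * lconv κ (fun _ : ℝ => (1:ℝ)) t + lconv κ (lconv (fun _ : ℝ => (1:ℝ)) Df) t := by
      rw [lconv_add κ _ _ ?hg ?hh, lconv_const_mul]
      case hg =>
        have := conv_integrand_ii hκC (InCm1.const c) ht
        refine this.congr ?_
        intro τ _
        simp
      case hh => exact conv_integrand_ii hκC hP ht
    have step3 : lconv κ (lconv (fun _ : ℝ => (1:ℝ)) Df) t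
        = ∫ x in (0:ℝ)..t, lconv κ Df x := by
      rw [← lconv_assoc hκC hone hDf ht]
      have hswap : lconv κ (fun _ : ℝ => (1:ℝ)) = lconv (fun _ : ℝ => (1:ℝ)) κ :=
        funext fun τ => lconv_comm _ _ τ
      rw [hswap, lconv_assoc hone hκC hDf ht]
      exact lconv_one_left _ t
    rw [step1, step2, step3, lconv_one_right]
  intro t₀ ht₀
  have hw : InCm1 (lconv κ Df) := inCm1_lconv hκC hDf
  have A : HasDerivAt (fun u => ∫ x in (0:ℝ)..u, f x) (f t₀) t₀ := hasDerivAt_primitive hf ht₀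
  have B : HasDerivAt
      (fun u => c * (∫ x in (0:ℝ)..u, κ x) + ∫ x in (0:ℝ)..u, lconv κ Df x)
      (c * κ t₀ + lconv κ Df t₀) t₀ :=
    ((hasDerivAt_primitive hκC ht₀).const_mul c).add (hasDerivAt_primitive hw ht₀)
  have hEq : (fun u => c * (∫ x in (0:ℝ)..u, κ x) + ∫ x in (0:ℝ)..u, lconv κ Df x)
      =ᶠ[nhds t₀] (fun u => ∫ x in (0:ℝ)..u, f x) := by
    filter_upwards [Ioi_mem_nhds ht₀] with u hu
    rw [← E2 u hu, E3 u hu]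
  have A' : HasDerivAt (fun u => c * (∫ x in (0:ℝ)..u, κ x) + ∫ x in (0:ℝ)..u, lconv κ Df x)
      (f t₀) t₀ := A.congr_of_eventuallyEq hEq
  have huniq : f t₀ = c * κ t₀ + lconv κ Df t₀ := A'.unique B
  rw [hDf_def] at *
  linarith [huniq]

lemma inCm1_convNPow {κ : ℝ → ℝ} (hκ : InCm1 κ) : ∀ j, InCm1 (convNPow κ j)
  | 0 => hκ
  | j + 1 => inCm1_lconv hκ (inCm1_convNPow hκ j)

lemma ii_sum_integrand (f : ℝ → ℝ) {n : ℕ} (u : ℕ → ℝ → ℝ) (c : ℕ → ℝ) {t : ℝ}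
    (hu : ∀ j, j < n → IntervalIntegrable (fun τ => f (t - τ) * u j τ) volume 0 t) :
    IntervalIntegrable (fun τ => f (t - τ) * ∑ j ∈ Finset.range n, c j * u j τ)
      volume 0 t := by
  have h := IntervalIntegrable.sum (μ := volume) (a := 0) (b := t) (Finset.range n)
    (f := fun j => fun τ => c j * (f (t - τ) * u j τ))
    (fun j hj => ((hu j (Finset.mem_range.mp hj)).const_mul (c j)))
  have he : (fun τ => f (t - τ) * ∑ j ∈ Finset.range n, c j * u j τ)
      = fun τ => ∑ j ∈ Finset.range n, c j * (f (t - τ) * u j τ) := by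
    funext τ
    rw [Finset.mul_sum]
    exact Finset.sum_congr rfl fun j _ => by ring
  have hfun : (fun τ => ∑ j ∈ Finset.range n, c j * (f (t - τ) * u j τ))
      = ∑ i ∈ Finset.range n, (fun τ => c i * (f (t - τ) * u i τ)) := by
    funext τ; simp
  rw [he, hfun]
  exact h

lemma lconv_finset_sum (f : ℝ → ℝ) {n : ℕ} (u : ℕ → ℝ → ℝ) (c : ℕ → ℝ) {t : ℝ}
    (hu : ∀ j, j < n → IntervalIntegrable (fun τ => f (t - τ) * u j τ) volume 0 t) :
    lconv f (fun τ => ∑ j ∈ Finset.range n, c j * u j τ) t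
      = ∑ j ∈ Finset.range n, c j * lconv f (u j) t := by
  induction n with
  | zero => simp [lconv]
  | succ m ih =>
    rw [Finset.sum_range_succ]
    have e1 : (fun τ => ∑ j ∈ Finset.range (m+1), c j * u j τ)
        = (fun τ => (∑ j ∈ Finset.range m, c j * u j τ) + c m * u m τ) := by
      funext τ; rw [Finset.sum_range_succ]
    have h1 : IntervalIntegrable
        (fun τ => f (t - τ) * ∑ j ∈ Finset.range m, c j * u j τ) volume 0 t :=
      ii_sum_integrand f u c (fun j hj => hu j (by omega))
    have h2 : IntervalIntegrable (fun τ => f (t - τ) * (c m * u m τ)) volume 0 t := by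
      have := (hu m (by omega)).const_mul (c m)
      have he : (fun τ => f (t - τ) * (c m * u m τ))
          = fun τ => c m * (f (t - τ) * u m τ) := by funext τ; ring
      rw [he]; exact this
    rw [e1, lconv_add f _ _ h1 h2, ih (fun j hj => hu j (by omega)), lconv_const_mul]

/-- first part of Theorem 2 / `tgcTfn` of the paper: the second fundamental
theorem of FC for the `n`-fold sequential GFD of Riemann–Liouville type. -/
theorem second_fundamental_theorem_RL
    (κ k : ℝ → ℝ) (h : SoninePairL1 κ k) (n : ℕ) (hn : 1 ≤ n)
    (f : ℝ → ℝ)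
    (hdiff : ∀ j, j < n → ∀ t, 0 < t → DifferentiableAt ℝ (lconv k ((gfdRL k)^[j] f)) t)
    (hC : ∀ j, j ≤ n → InCm1 ((gfdRL k)^[j] f))
    (c : ℕ → ℝ)
    (hc : ∀ j, j < n →
      Filter.Tendsto (lconv k ((gfdRL k)^[j] f)) (nhdsWithin 0 (Set.Ioi 0)) (nhds (c j))) :
    ∀ t, 0 < t →
      lconv (convNPow κ (n - 1)) ((gfdRL k)^[n] f) t
        = f t - ∑ j ∈ Finset.range n, c j * convNPow κ j t := by
  have hκ : InCm1 κ := h.fst_inCm1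
  induction n generalizing f c with
  | zero => omega
  | succ m ih =>
    -- key lemma instance for f
    have hf0 : InCm1 f := by
      have := hC 0 (by omega); rwa [Function.iterate_zero_apply] at this
    have hdiff0 : ∀ t, 0 < t → DifferentiableAt ℝ (lconv k f) t := by
      have := hdiff 0 (by omega); rwa [Function.iterate_zero_apply] at this
    have hDf1 : InCm1 (gfdRL k f) := by
      have := hC 1 (by omega); rwa [Function.iterate_one] at this
    have hc0 : Filter.Tendsto (lconv k f) (nhdsWithin 0 (Set.Ioi 0)) (nhds (c 0)) := by
      have := hc 0 (by omega); rwa [Function.iterate_zero_apply] at this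
    have hkey : ∀ t, 0 < t → lconv κ (gfdRL k f) t = f t - c 0 * κ t :=
      key_lemma h hf0 hdiff0 hDf1 hc0
    rcases Nat.eq_zero_or_pos m with hm0 | hm1
    · subst hm0
      intro t ht
      have e0 : convNPow κ (1 - 1) = κ := rfl
      rw [e0, Function.iterate_one, hkey t ht, Finset.sum_range_one]
      rfl
    · -- inductive step
      set F : ℝ → ℝ := gfdRL k f with hF
      have hdiff' : ∀ j, j < m → ∀ t, 0 < t → DifferentiableAt ℝ (lconv k ((gfdRL k)^[j] F)) t := by
        intro j hj
        have := hdiff (j+1) (by omega)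
        rwa [Function.iterate_succ_apply] at this
      have hC' : ∀ j, j ≤ m → InCm1 ((gfdRL k)^[j] F) := by
        intro j hj
        have := hC (j+1) (by omega)
        rwa [Function.iterate_succ_apply] at this
      have hc' : ∀ j, j < m →
          Filter.Tendsto (lconv k ((gfdRL k)^[j] F)) (nhdsWithin 0 (Set.Ioi 0))
            (nhds ((fun i => c (i+1)) j)) := by
        intro j hj
        have := hc (j+1) (by omega)
        rwa [Function.iterate_succ_apply] at this
      have IH := ih hm1 F hdiff' hC' (fun i => c (i+1)) hc'
      intro t ht
      have hA : InCm1 (convNPow κ (m - 1)) := inCm1_convNPow hκ _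
      have hG : InCm1 ((gfdRL k)^[m] F) := hC' m (le_refl m)
      have hmm : m - 1 + 1 = m := Nat.succ_pred_eq_of_pos hm1
      have hNsucc : convNPow κ ((m + 1) - 1) = lconv κ (convNPow κ (m - 1)) := by
        show convNPow κ m = _
        rw [← hmm]
        rfl
      have hGsucc : (gfdRL k)^[m+1] f = (gfdRL k)^[m] F := Function.iterate_succ_apply _ _ _
      rw [hNsucc, hGsucc, lconv_assoc hκ hA hG ht]
      have hcongr : lconv κ (lconv (convNPow κ (m-1)) ((gfdRL k)^[m] F)) t
          = lconv κ (fun τ => F τ - ∑ j ∈ Finset.range m, c (j+1) * convNPow κ j τ) t := by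
        refine lconv_congr κ ht fun τ hτ => ?_
        exact IH τ hτ.1
      rw [hcongr]
      have hiiF : IntervalIntegrable (fun τ => κ (t - τ) * F τ) volume 0 t :=
        conv_integrand_ii hκ hDf1 ht
      have hiiS : IntervalIntegrable
          (fun τ => κ (t - τ) * ∑ j ∈ Finset.range m, c (j+1) * convNPow κ j τ) volume 0 t :=
        ii_sum_integrand κ (fun j => convNPow κ j) (fun j => c (j+1))
          (fun j hj => conv_integrand_ii hκ (inCm1_convNPow hκ j) ht)
      rw [lconv_sub κ _ _ hiiF hiiS,
        lconv_finset_sum κ (fun j => convNPow κ j) (fun j => c (j+1))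
          (fun j hj => conv_integrand_ii hκ (inCm1_convNPow hκ j) ht),
        hkey t ht]
      have hsum : ∑ j ∈ Finset.range (m+1), c j * convNPow κ j t
          = (∑ j ∈ Finset.range m, c (j+1) * convNPow κ (j+1) t) + c 0 * convNPow κ 0 t :=
        Finset.sum_range_succ' _ m
      rw [hsum]
      have : ∀ j ∈ Finset.range m, c (j+1) * lconv κ (convNPow κ j) t
          = c (j+1) * convNPow κ (j+1) t := fun j _ => rfl
      rw [Finset.sum_congr rfl this]
      show f t - c 0 * κ t - _ = _
      have e0 : convNPow κ 0 t = κ t := rfl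
      rw [e0]
      ring
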